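/- For f : (0,∞) → ℝ with f ∈ L^1((0,∞), r dr), the function g(r) = -∫_r^∞ f(s) ds satisfies ‖g‖_{L^2(r dr)} ≲ ‖f‖_{L^1(r dr)}. -/

import Mathlib

/-!
Write `T r = ∫_r^∞ |f|` and `M = ∫ |f| r dr`. Since `s > r` on the range of integration,
`r T(r) ≤ M`, hence `r T(r)² ≤ M T(r)`; and by Tonelli `∫_0^∞ T(r) dr = ∫_0^∞ s |f(s)| ds = M`.
Together `∫ T² r dr ≤ M²`, i.e. `‖g‖_{L²(r dr)} ≤ ‖T‖_{L²(r dr)} ≤ ‖f‖_{L¹(r dr)}`.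
-/

open MeasureTheory Set
open scoped ENNReal NNReal

/-- The measure `r dr` on `(0,∞)`. -/
noncomputable def muRad : Measure ℝ :=
  (volume.restrict (Set.Ioi (0:ℝ))).withDensity (fun r => ENNReal.ofReal r)

theorem lintegral_muRad (G : ℝ → ℝ≥0∞) :
    ∫⁻ r, G r ∂muRad = ∫⁻ r in Ioi 0, ENNReal.ofReal r * G r :=
  lintegral_withDensity_eq_lintegral_mul_non_measurable _ ENNReal.measurable_ofReal
    (.of_forall fun _ => ENNReal.ofReal_lt_top) G

theorem antitone_setLIntegral_Ioi (F : ℝ → ℝ≥0∞) : Antitone fun r => ∫⁻ s in Ioi r, F s :=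
  fun _ _ hab => lintegral_mono_set (Ioi_subset_Ioi hab)

theorem lintegral_setLIntegral_Ioi_eq_lintegral_muRad {F : ℝ → ℝ≥0∞} (hF : Measurable F) :
    ∫⁻ r in Ioi 0, ∫⁻ s in Ioi r, F s = ∫⁻ s, F s ∂muRad := by
  have hmeas : Measurable fun p : ℝ × ℝ => {p : ℝ × ℝ | p.1 < p.2}.indicator (F ∘ Prod.snd) p :=
    (hF.comp measurable_snd).indicator (measurableSet_lt measurable_fst measurable_snd)
  calc ∫⁻ r in Ioi 0, ∫⁻ s in Ioi r, F s
      = ∫⁻ r in Ioi 0, ∫⁻ s, {p : ℝ × ℝ | p.1 < p.2}.indicator (F ∘ Prod.snd) (r, s) := by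
        congr! 2 with r
        rw [← lintegral_indicator measurableSet_Ioi]
        rfl
    _ = ∫⁻ s, ∫⁻ r in Ioi 0, {p : ℝ × ℝ | p.1 < p.2}.indicator (F ∘ Prod.snd) (r, s) :=
        lintegral_lintegral_swap hmeas.aemeasurable
    _ = ∫⁻ s, ENNReal.ofReal s * F s := by
        refine lintegral_congr fun s => ?_
        have hslice : (fun r => {p : ℝ × ℝ | p.1 < p.2}.indicator (F ∘ Prod.snd) (r, s))
            = (Iio s).indicator fun _ => F s := by
          ext r; simp [indicator_apply]
        rw [hslice, lintegral_indicator_const measurableSet_Iio,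
          Measure.restrict_apply measurableSet_Iio, Iio_inter_Ioi, Real.volume_Ioo, sub_zero,
          mul_comm]
    _ = ∫⁻ s, F s ∂muRad := by
        rw [lintegral_muRad, ← lintegral_indicator measurableSet_Ioi]
        refine lintegral_congr fun s => ?_
        by_cases hs : 0 < s
        · simp [hs]
        · simp [hs, ENNReal.ofReal_eq_zero.2 (not_lt.1 hs)]

theorem ofReal_mul_setLIntegral_Ioi_le (F : ℝ → ℝ≥0∞) {r : ℝ} (hr : 0 ≤ r) :
    ENNReal.ofReal r * ∫⁻ s in Ioi r, F s ≤ ∫⁻ s, F s ∂muRad := by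
  rw [lintegral_muRad, ← lintegral_const_mul' _ _ ENNReal.ofReal_ne_top]
  calc ∫⁻ s in Ioi r, ENNReal.ofReal r * F s
      ≤ ∫⁻ s in Ioi r, ENNReal.ofReal s * F s :=
        setLIntegral_mono' measurableSet_Ioi fun s hs =>
          mul_le_mul_left (ENNReal.ofReal_le_ofReal hs.le) _
    _ ≤ ∫⁻ s in Ioi 0, ENNReal.ofReal s * F s := lintegral_mono_set (Ioi_subset_Ioi hr)

theorem lintegral_muRad_sq_setLIntegral_Ioi_le {F : ℝ → ℝ≥0∞} (hF : Measurable F) :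
    ∫⁻ r, (∫⁻ s in Ioi r, F s) ^ 2 ∂muRad ≤ (∫⁻ s, F s ∂muRad) ^ 2 := by
  set T := fun r => ∫⁻ s in Ioi r, F s
  calc ∫⁻ r, T r ^ 2 ∂muRad
      = ∫⁻ r in Ioi 0, ENNReal.ofReal r * T r * T r := by
        rw [lintegral_muRad]; simp only [sq, mul_assoc]
    _ ≤ ∫⁻ r in Ioi 0, (∫⁻ s, F s ∂muRad) * T r :=
        setLIntegral_mono' measurableSet_Ioi fun r hr =>
          mul_le_mul_left (ofReal_mul_setLIntegral_Ioi_le F hr.le) _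
    _ = (∫⁻ s, F s ∂muRad) ^ 2 := by
        rw [lintegral_const_mul _ (antitone_setLIntegral_Ioi F).measurable,
          lintegral_setLIntegral_Ioi_eq_lintegral_muRad hF, sq]

theorem eLpNorm_setLIntegral_Ioi_le {F : ℝ → ℝ≥0∞} (hF : Measurable F) :
    eLpNorm (fun r => ∫⁻ s in Ioi r, F s) 2 muRad ≤ ∫⁻ s, F s ∂muRad := by
  rw [eLpNorm_eq_lintegral_rpow_enorm_toReal two_ne_zero ENNReal.ofNat_ne_top]
  simp only [enorm_eq_self, ENNReal.toReal_ofNat, ENNReal.rpow_two]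
  calc (∫⁻ r, (∫⁻ s in Ioi r, F s) ^ 2 ∂muRad) ^ (1 / 2 : ℝ)
      ≤ ((∫⁻ s, F s ∂muRad) ^ 2) ^ (1 / 2 : ℝ) := by
        gcongr; exact lintegral_muRad_sq_setLIntegral_Ioi_le hF
    _ = ∫⁻ s, F s ∂muRad := by
        rw [← ENNReal.rpow_natCast, ← ENNReal.rpow_mul]; norm_num

/-- For `f ∈ L¹(r dr)`, the function `g(r) = -∫_r^∞ f(s) ds` satisfies
`‖g‖_{L²(r dr)} ≲ ‖f‖_{L¹(r dr)}`. -/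
theorem stmt2 :
    ∃ C : ℝ≥0, 0 < C ∧ ∀ f : ℝ → ℝ, Measurable f → MemLp f 1 muRad →
      eLpNorm (fun r => -∫ s in Set.Ioi r, f s) 2 muRad ≤ C * eLpNorm f 1 muRad := by
  refine ⟨1, one_pos, fun f hf _ => ?_⟩
  calc eLpNorm (fun r => -∫ s in Ioi r, f s) 2 muRad
      ≤ eLpNorm (fun r => ∫⁻ s in Ioi r, ‖f s‖ₑ) 2 muRad :=
        eLpNorm_mono_enorm fun r => by
          rw [enorm_neg, enorm_eq_self]; exact enorm_integral_le_lintegral_enorm _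
    _ ≤ ∫⁻ s, ‖f s‖ₑ ∂muRad := eLpNorm_setLIntegral_Ioi_le hf.enorm
    _ = 1 * eLpNorm f 1 muRad := by rw [one_mul, eLpNorm_one_eq_lintegral_enorm]
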